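/- arXiv:1908.11594 — 2 statements merged into one kernel-verified Lean document; each statement's English description precedes it below -/
import Mathlib

section
/- Let $\{Q_k\}_k$ be a countable family of pairwise disjoint cubes in $\mathbb{R}^d$ with side lengths $l(Q_k)$, let $s > 0$, and define $T_s f(x) = \sum_k \int_{Q_k} \frac{l(Q_k)^s}{(l(Q_k)+|x-y|)^{d+s}} |f(y)|\,dy$. If $w \in A_1(\mathbb{R}^d)$ and $f \in L^1(\mathbb{R}^d, w)$, then $\|T_s f\|_{L^1(\mathbb{R}^d,w)} \leq C [w]_{A_1} \|f\|_{L^1(\mathbb{R}^d,w)}$ with $C$ depending only on $d$ and $s$. -/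
open MeasureTheory Metric Filter ENNReal NNReal

noncomputable section

/-- The axis-parallel cube in `ℝ^d` with center `c` and side length `r`. -/
def Cube {d : ℕ} (c : EuclideanSpace ℝ (Fin d)) (r : ℝ) : Set (EuclideanSpace ℝ (Fin d)) :=
  {y | ∀ i, |y i - c i| ≤ r / 2}

/-- The Hardy–Littlewood maximal function (ENNReal-valued). -/
def maximalFn {d : ℕ} (f : EuclideanSpace ℝ (Fin d) → ℝ)
    (x : EuclideanSpace ℝ (Fin d)) : ℝ≥0∞ :=
  ⨆ (r : ℝ) (_ : 0 < r),
    (∫⁻ y in Metric.ball x r, (‖f y‖₊ : ℝ≥0∞) ∂volume) / volume (Metric.ball x r)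

/-!
The kernel of `T_s` varies by at most a constant factor as `y` moves inside a cube `Q_k`, so
it can be replaced by its value at the centre `c_k`; this splits `x` from `y`, and the
`x`-integral that remains, `∫ l_k^s / (l_k + |x - c_k|)^(d+s) w(x) dx`, is at most a constant
times `Mw(y)` for every `y ∈ Q_k` (cut the kernel into dyadic shells around `y`; the shell of
radius `2^j l_k` contributes `2^(-j s) Mw(y)`). The `A₁` condition turns `Mw(y)` into
`[w]_{A₁} w(y)`, and disjointness of the cubes sums the pieces into `∫ |f| w`.
-/

section Transfer

variable {α ι : Type*} [MeasurableSpace α] {μ : Measure α}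

theorem lintegral_mul_le_of_ae_le_mul {g W : α → ℝ≥0∞} {b κ : ℝ≥0∞} (hκ : κ ≠ ∞)
    (h : ∀ᵐ y ∂μ, b ≤ κ * W y) :
    (∫⁻ y, g y ∂μ) * b ≤ κ * ∫⁻ y, g y * W y ∂μ :=
  calc (∫⁻ y, g y ∂μ) * b ≤ ∫⁻ y, g y * b ∂μ := lintegral_mul_const_le b g
    _ ≤ ∫⁻ y, κ * (g y * W y) ∂μ :=
      lintegral_mono_ae <| h.mono fun y hy => by rw [mul_left_comm]; gcongr
    _ = κ * ∫⁻ y, g y * W y ∂μ := lintegral_const_mul' κ _ hκ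

/-- `g` need not be measurable: only the bounds `φ k` on the kernels are integrated in `x`. -/
theorem lintegral_tsum_setLIntegral_mul_le [Countable ι] {Q : ι → Set α}
    (hQ : ∀ k, MeasurableSet (Q k)) (hdisj : Pairwise (Function.onFun Disjoint Q))
    {K : ι → α → α → ℝ≥0∞} {φ : ι → α → ℝ≥0∞} (hφm : ∀ k, AEMeasurable (φ k) μ)
    (hφ_top : ∀ k x, φ k x ≠ ∞) (hK : ∀ k x, ∀ y ∈ Q k, K k x y ≤ φ k x)
    {g W : α → ℝ≥0∞} (hW : AEMeasurable W μ) {κ : ℝ≥0∞} (hκ : κ ≠ ∞)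
    (hφW : ∀ k, ∀ᵐ y ∂μ.restrict (Q k), ∫⁻ x, φ k x * W x ∂μ ≤ κ * W y) :
    ∫⁻ x, (∑' k, ∫⁻ y in Q k, K k x y * g y ∂μ) * W x ∂μ ≤ κ * ∫⁻ y, g y * W y ∂μ := by
  have hinner : ∀ k x, ∫⁻ y in Q k, K k x y * g y ∂μ ≤ φ k x * ∫⁻ y in Q k, g y ∂μ :=
    fun k x => calc
      _ ≤ ∫⁻ y in Q k, φ k x * g y ∂μ :=
        setLIntegral_mono' (hQ k) fun y hy => by gcongr; exact hK k x y hy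
      _ = _ := lintegral_const_mul' _ _ (hφ_top k x)
  calc ∫⁻ x, (∑' k, ∫⁻ y in Q k, K k x y * g y ∂μ) * W x ∂μ
      ≤ ∫⁻ x, ∑' k, (∫⁻ y in Q k, g y ∂μ) * (φ k x * W x) ∂μ := lintegral_mono fun x => by
        rw [← ENNReal.tsum_mul_right]
        refine ENNReal.tsum_le_tsum fun k => ?_
        calc _ ≤ φ k x * (∫⁻ y in Q k, g y ∂μ) * W x := by gcongr; exact hinner k x
          _ = _ := by ring
    _ = ∑' k, (∫⁻ y in Q k, g y ∂μ) * ∫⁻ x, φ k x * W x ∂μ := by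
        rw [lintegral_tsum (f := fun k x => (∫⁻ y in Q k, g y ∂μ) * (φ k x * W x))
          fun k => ((hφm k).mul hW).const_mul _]
        congr with k
        exact lintegral_const_mul'' _ ((hφm k).mul hW)
    _ ≤ ∑' k, κ * ∫⁻ y in Q k, g y * W y ∂μ :=
        ENNReal.tsum_le_tsum fun k => lintegral_mul_le_of_ae_le_mul hκ (hφW k)
    _ = κ * ∫⁻ y in ⋃ k, Q k, g y * W y ∂μ := by
        rw [ENNReal.tsum_mul_left, lintegral_iUnion hQ hdisj]
    _ ≤ κ * ∫⁻ y, g y * W y ∂μ := by gcongr; exact Measure.restrict_le_self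

end Transfer

section Kernel

variable {E : Type*} [SeminormedAddCommGroup E] {s p l a : ℝ}

theorem add_norm_sub_le_one_add_mul {x y c : E} (ha : 0 ≤ a) (hyc : ‖y - c‖ ≤ a * l) :
    l + ‖x - c‖ ≤ (1 + a) * (l + ‖x - y‖) := by
  have := norm_sub_le_norm_sub_add_norm_sub x y c
  nlinarith [mul_nonneg ha (norm_nonneg (x - y))]

theorem ofReal_kernel_le_mul_ofReal_kernel {x y c : E} (hp : 0 ≤ p) (hl : 0 < l) (ha : 0 ≤ a)
    (hyc : ‖y - c‖ ≤ a * l) :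
    ENNReal.ofReal (l ^ s / (l + ‖x - y‖) ^ p) ≤
      ENNReal.ofReal ((1 + a) ^ p) * ENNReal.ofReal (l ^ s / (l + ‖x - c‖) ^ p) := by
  have hy : 0 < l + ‖x - y‖ := by positivity
  rw [← ENNReal.ofReal_mul (by positivity)]
  refine ENNReal.ofReal_le_ofReal ?_
  rw [mul_div_assoc', div_le_div_iff₀ (by positivity) (by positivity)]
  calc l ^ s * (l + ‖x - c‖) ^ p ≤ l ^ s * ((1 + a) * (l + ‖x - y‖)) ^ p := by
        gcongr; exact add_norm_sub_le_one_add_mul ha hyc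
    _ = (1 + a) ^ p * l ^ s * (l + ‖x - y‖) ^ p := by
        rw [Real.mul_rpow (by positivity) hy.le]; ring

theorem ofReal_kernel_le_tsum_indicator_ball (hp : 0 ≤ p) (hl : 0 < l) (x y : E) :
    ENNReal.ofReal (l ^ s / (l + ‖x - y‖) ^ p) ≤
      ∑' j : ℕ, (ball y (2 ^ (j + 1) * l)).indicator
        (fun _ => ENNReal.ofReal (l ^ s / (2 ^ j * l) ^ p)) x := by
  have hone : 1 ≤ (l + ‖x - y‖) / l := by
    rw [le_div_iff₀ hl]; linarith [norm_nonneg (x - y)]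
  obtain ⟨j, hj, hj'⟩ := exists_nat_pow_near hone one_lt_two
  rw [le_div_iff₀ hl] at hj
  rw [div_lt_iff₀ hl] at hj'
  refine le_trans ?_ (ENNReal.le_tsum j)
  rw [Set.indicator_of_mem (by rw [mem_ball, dist_eq_norm]; linarith)]
  gcongr

end Kernel

section Euclidean

variable {d : ℕ}

theorem isClosed_cube (c : EuclideanSpace ℝ (Fin d)) (r : ℝ) : IsClosed (Cube c r) := by
  simp only [Cube, Set.ofPred_forall]
  exact isClosed_iInter fun i => isClosed_le (by fun_prop) continuous_const

theorem norm_sub_le_of_mem_cube {c y : EuclideanSpace ℝ (Fin d)} {r : ℝ} (hr : 0 ≤ r)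
    (hy : y ∈ Cube c r) : ‖y - c‖ ≤ √d / 2 * r := by
  have hsum : ∑ i, ‖(y - c) i‖ ^ 2 ≤ d * (r / 2) ^ 2 := by
    calc ∑ i, ‖(y - c) i‖ ^ 2 ≤ ∑ _i : Fin d, (r / 2) ^ 2 := by
          gcongr with i
          simpa using hy i
      _ = d * (r / 2) ^ 2 := by simp
  calc ‖y - c‖ ≤ √(d * (r / 2) ^ 2) := by
        rw [EuclideanSpace.norm_eq]; exact Real.sqrt_le_sqrt hsum
    _ = √d / 2 * r := by
        rw [Real.sqrt_mul (Nat.cast_nonneg d), Real.sqrt_sq (by linarith)]; ring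

theorem setLIntegral_ball_le_maximalFn_mul {w : EuclideanSpace ℝ (Fin d) → ℝ} (hw : ∀ x, 0 ≤ w x)
    (y : EuclideanSpace ℝ (Fin d)) {R : ℝ} (hR : 0 < R) :
    ∫⁻ x in ball y R, ENNReal.ofReal (w x) ≤ maximalFn w y * volume (ball y R) := by
  rw [← ENNReal.div_le_iff (measure_ball_pos _ y hR).ne' measure_ball_lt_top.ne]
  calc (∫⁻ x in ball y R, ENNReal.ofReal (w x)) / volume (ball y R)
      = (∫⁻ x in ball y R, (‖w x‖₊ : ℝ≥0∞)) / volume (ball y R) := by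
        simp_rw [← Real.enorm_eq_ofReal (hw _)]; rfl
    _ ≤ maximalFn w y := le_iSup₂_of_le (f := fun r (_ : 0 < r) =>
        (∫⁻ x in ball y r, (‖w x‖₊ : ℝ≥0∞)) / volume (ball y r)) R hR le_rfl

theorem ofReal_kernel_dyadic_mul_volume_ball {l : ℝ} (hl : 0 < l) (s : ℝ) (j : ℕ)
    (y : EuclideanSpace ℝ (Fin d)) :
    ENNReal.ofReal (l ^ s / (2 ^ j * l) ^ ((d : ℝ) + s)) * volume (ball y (2 ^ (j + 1) * l)) =
      2 ^ d * volume (ball (0 : EuclideanSpace ℝ (Fin d)) 1) * ENNReal.ofReal (2 ^ (-s)) ^ j := by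
  have h2j : (0 : ℝ) < 2 ^ j := by positivity
  have hreal : l ^ s / (2 ^ j * l) ^ ((d : ℝ) + s) * (2 ^ (j + 1) * l) ^ d =
      2 ^ d * (2 ^ (-s)) ^ j := by
    rw [Real.rpow_add (by positivity), Real.rpow_natCast, Real.mul_rpow h2j.le hl.le,
      Real.rpow_neg zero_le_two, inv_pow, ← Real.rpow_natCast_mul zero_le_two, pow_succ,
      ← Real.rpow_mul_natCast zero_le_two]
    field_simp
    ring
  rw [Measure.addHaar_ball_of_pos _ _ (by positivity), finrank_euclideanSpace_fin, ← mul_assoc,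
    ← ENNReal.ofReal_mul (by positivity), hreal, ENNReal.ofReal_mul (by positivity),
    ENNReal.ofReal_pow zero_le_two, ENNReal.ofReal_pow (by positivity), ENNReal.ofReal_ofNat]
  ring

variable (d) in
def kernelMaximalConst (s : ℝ) : ℝ≥0∞ :=
  2 ^ d * volume (ball (0 : EuclideanSpace ℝ (Fin d)) 1) * (1 - ENNReal.ofReal (2 ^ (-s)))⁻¹

theorem kernelMaximalConst_ne_zero (s : ℝ) : kernelMaximalConst d s ≠ 0 :=
  mul_ne_zero (mul_ne_zero (pow_ne_zero _ two_ne_zero) (measure_ball_pos _ _ one_pos).ne')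
    (ENNReal.inv_ne_zero.2 (ENNReal.sub_ne_top one_ne_top))

theorem kernelMaximalConst_ne_top {s : ℝ} (hs : 0 < s) : kernelMaximalConst d s ≠ ∞ := by
  have hr : ENNReal.ofReal (2 ^ (-s)) < 1 :=
    ENNReal.ofReal_lt_one.2 (Real.rpow_lt_one_of_one_lt_of_neg one_lt_two (neg_neg_of_pos hs))
  exact mul_ne_top (mul_ne_top (pow_ne_top ofNat_ne_top) measure_ball_lt_top.ne)
    (ENNReal.inv_ne_top.2 (tsub_pos_of_lt hr).ne')

theorem lintegral_kernel_mul_le_maximalFn {s l : ℝ} (hp : 0 ≤ (d : ℝ) + s) (hl : 0 < l)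
    {w : EuclideanSpace ℝ (Fin d) → ℝ} (hw : ∀ x, 0 ≤ w x)
    (hwm : AEMeasurable (fun x => ENNReal.ofReal (w x))) (y : EuclideanSpace ℝ (Fin d)) :
    ∫⁻ x, ENNReal.ofReal (l ^ s / (l + ‖x - y‖) ^ ((d : ℝ) + s)) * ENNReal.ofReal (w x) ≤
      kernelMaximalConst d s * maximalFn w y := by
  set W := fun x => ENNReal.ofReal (w x)
  set coeff := fun j : ℕ => ENNReal.ofReal (l ^ s / (2 ^ j * l) ^ ((d : ℝ) + s))
  have hR : ∀ j : ℕ, (0 : ℝ) < 2 ^ (j + 1) * l := fun j => by positivity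
  calc ∫⁻ x, ENNReal.ofReal (l ^ s / (l + ‖x - y‖) ^ ((d : ℝ) + s)) * W x
      ≤ ∫⁻ x, ∑' j : ℕ, (ball y (2 ^ (j + 1) * l)).indicator (fun x => coeff j * W x) x :=
        lintegral_mono fun x => by
          simp_rw [Set.indicator_mul_left, ENNReal.tsum_mul_right]
          gcongr
          exact ofReal_kernel_le_tsum_indicator_ball hp hl x y
    _ = ∑' j : ℕ, coeff j * ∫⁻ x in ball y (2 ^ (j + 1) * l), W x := by
        rw [lintegral_tsum fun j => (hwm.const_mul _).indicator measurableSet_ball]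
        congr with j
        rw [lintegral_indicator measurableSet_ball, lintegral_const_mul'' _ hwm.restrict]
    _ ≤ ∑' j : ℕ, coeff j * (maximalFn w y * volume (ball y (2 ^ (j + 1) * l))) := by
        gcongr with j
        exact setLIntegral_ball_le_maximalFn_mul hw y (hR j)
    _ = ∑' j : ℕ, 2 ^ d * volume (ball (0 : EuclideanSpace ℝ (Fin d)) 1) *
          ENNReal.ofReal (2 ^ (-s)) ^ j * maximalFn w y := by
        congr with j
        rw [mul_left_comm, mul_comm]
        exact congrArg (· * maximalFn w y) (ofReal_kernel_dyadic_mul_volume_ball hl s j y)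
    _ = _ := by
        rw [ENNReal.tsum_mul_right, ENNReal.tsum_mul_left, ENNReal.tsum_geometric]; rfl

theorem lintegral_kernel_mul_le_maximalFn_of_norm_sub_le {s l a : ℝ} (hp : 0 ≤ (d : ℝ) + s)
    (hl : 0 < l) (ha : 0 ≤ a) {w : EuclideanSpace ℝ (Fin d) → ℝ} (hw : ∀ x, 0 ≤ w x)
    (hwm : AEMeasurable (fun x => ENNReal.ofReal (w x))) {c y : EuclideanSpace ℝ (Fin d)}
    (hyc : ‖y - c‖ ≤ a * l) :
    ∫⁻ x, ENNReal.ofReal (l ^ s / (l + ‖x - c‖) ^ ((d : ℝ) + s)) * ENNReal.ofReal (w x) ≤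
      ENNReal.ofReal ((1 + a) ^ ((d : ℝ) + s)) * kernelMaximalConst d s * maximalFn w y := by
  rw [norm_sub_rev] at hyc
  calc _ ≤ ∫⁻ x, ENNReal.ofReal ((1 + a) ^ ((d : ℝ) + s)) *
          (ENNReal.ofReal (l ^ s / (l + ‖x - y‖) ^ ((d : ℝ) + s)) * ENNReal.ofReal (w x)) :=
        lintegral_mono fun x => by
          rw [← mul_assoc]; gcongr; exact ofReal_kernel_le_mul_ofReal_kernel hp hl ha hyc
    _ ≤ _ := by
        rw [lintegral_const_mul' _ _ ofReal_ne_top, mul_assoc]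
        gcongr
        exact lintegral_kernel_mul_le_maximalFn hp hl hw hwm y

end Euclidean

theorem Ts_weighted_L1_general (d : ℕ) (s : ℝ) (hs : 0 < s) :
    ∃ C : ℝ≥0∞, C ≠ 0 ∧ C ≠ ⊤ ∧
      ∀ (w : EuclideanSpace ℝ (Fin d) → ℝ) (cA1 : ℝ≥0),
        (∀ x, 0 ≤ w x) → LocallyIntegrable w volume →
        (∀ᵐ x ∂volume, maximalFn w x ≤ (cA1 : ℝ≥0∞) * ENNReal.ofReal (w x)) →
        ∀ (c : ℕ → EuclideanSpace ℝ (Fin d)) (l : ℕ → ℝ), (∀ k, 0 < l k) →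
        Pairwise (Function.onFun Disjoint fun k => Cube (c k) (l k)) →
        ∀ (f : EuclideanSpace ℝ (Fin d) → ℝ),
          (∫⁻ x, (∑' k, ∫⁻ y in Cube (c k) (l k),
              ENNReal.ofReal (l k ^ s / (l k + ‖x - y‖) ^ ((d : ℝ) + s)) *
                (‖f y‖₊ : ℝ≥0∞) ∂volume) * ENNReal.ofReal (w x) ∂volume)
            ≤ C * (cA1 : ℝ≥0∞) * ∫⁻ x, (‖f x‖₊ : ℝ≥0∞) * ENNReal.ofReal (w x) ∂volume := by
  set A := ENNReal.ofReal ((1 + √d / 2) ^ ((d : ℝ) + s))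
  have hA : A ≠ 0 := (ENNReal.ofReal_pos.2 (by positivity)).ne'
  have hC : A * (A * kernelMaximalConst d s) ≠ ∞ :=
    mul_ne_top ofReal_ne_top (mul_ne_top ofReal_ne_top (kernelMaximalConst_ne_top hs))
  refine ⟨A * (A * kernelMaximalConst d s), by simp [hA, kernelMaximalConst_ne_zero], hC, ?_⟩
  intro w cA1 hw hwloc hA1 c l hl hdisj f
  have hp : 0 ≤ (d : ℝ) + s := by positivity
  have hwm := hwloc.aestronglyMeasurable.aemeasurable.ennreal_ofReal
  have hQ k := (isClosed_cube (c k) (l k)).measurableSet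
  refine lintegral_tsum_setLIntegral_mul_le hQ hdisj
    (φ := fun k x => A * ENNReal.ofReal (l k ^ s / (l k + ‖x - c k‖) ^ ((d : ℝ) + s)))
    (fun k => by fun_prop) (fun k x => mul_ne_top ofReal_ne_top ofReal_ne_top)
    (fun k x y hy => ofReal_kernel_le_mul_ofReal_kernel hp (hl k) (by positivity)
      (norm_sub_le_of_mem_cube (hl k).le hy))
    hwm (mul_ne_top hC coe_ne_top) fun k => ?_
  filter_upwards [ae_restrict_mem (hQ k), ae_restrict_of_ae hA1] with y hy hMy
  simp_rw [mul_assoc A]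
  rw [lintegral_const_mul' _ _ ofReal_ne_top]
  calc _ ≤ A * (A * kernelMaximalConst d s * maximalFn w y) := by
        gcongr
        exact lintegral_kernel_mul_le_maximalFn_of_norm_sub_le hp (hl k) (by positivity) hw hwm
          (norm_sub_le_of_mem_cube (hl k).le hy)
    _ ≤ A * (A * kernelMaximalConst d s * (cA1 * ENNReal.ofReal (w y))) := by gcongr
    _ = _ := by ring

/-- Let `{Q_k}` be pairwise disjoint cubes with side lengths `l k`, `s > 0`, and
`T_s f(x) = ∑_k ∫_{Q_k} l(Q_k)^s/(l(Q_k)+|x-y|)^{d+s} |f(y)| dy`.  If `w ∈ A₁(ℝ^d)`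
(i.e. `Mw ≤ [w]_{A₁} w` a.e.) and `f ∈ L¹(ℝ^d,w)`, then
`‖T_s f‖_{L¹(w)} ≤ C [w]_{A₁} ‖f‖_{L¹(w)}` with `C` depending only on `d` and `s`. -/
theorem Ts_weighted_L1 (d : ℕ) (hd : 1 ≤ d) (s : ℝ) (hs : 0 < s) :
    ∃ C : ℝ≥0∞, C ≠ 0 ∧ C ≠ ⊤ ∧
      ∀ (w : EuclideanSpace ℝ (Fin d) → ℝ) (cA1 : ℝ≥0),
        (∀ x, 0 ≤ w x) → LocallyIntegrable w volume →
        (∀ᵐ x ∂volume, maximalFn w x ≤ (cA1 : ℝ≥0∞) * ENNReal.ofReal (w x)) →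
        ∀ (c : ℕ → EuclideanSpace ℝ (Fin d)) (l : ℕ → ℝ), (∀ k, 0 < l k) →
        Pairwise (Function.onFun Disjoint fun k => Cube (c k) (l k)) →
        ∀ (f : EuclideanSpace ℝ (Fin d) → ℝ),
          (∫⁻ x, (∑' k, ∫⁻ y in Cube (c k) (l k),
              ENNReal.ofReal (l k ^ s / (l k + ‖x - y‖) ^ ((d : ℝ) + s)) *
                (‖f y‖₊ : ℝ≥0∞) ∂volume) * ENNReal.ofReal (w x) ∂volume)
            ≤ C * (cA1 : ℝ≥0∞) * ∫⁻ x, (‖f x‖₊ : ℝ≥0∞) * ENNReal.ofReal (w x) ∂volume :=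
  Ts_weighted_L1_general d s hs
end
end

section
/- Let $d \geq 2$ and $A \in C_c^\infty(\mathbb{R}^d)$. Then for almost every $x, y \in \mathbb{R}^d$, $\frac{|A(x) - A(y)|}{|x-y|} \leq C_d \Big( M(\nabla A)(x) + M(\nabla A)(y) + \sum_{i=1}^d \sum_{j=1}^d T_{i,j}^*(\partial_j A)(x) \Big)$, where $M$ is the Hardy–Littlewood maximal operator and $T_{i,j}^* f(x) = \sup_{\varepsilon > 0} \big| \int_{|x-y| > \varepsilon} \partial_i \mathcal{K}_j(x-y) f(y)\,dy \big|$ with $\mathcal{K}_j(u) = u_j/|u|^d$. -/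
open MeasureTheory Metric Filter ENNReal NNReal

noncomputable section

/-- The maximal singular integral `T_{i,j}^* f(x) = sup_{ε>0} |∫_{|x-y|>ε} ∂_i 𝒦_j(x-y) f(y) dy|`
with `𝒦_j(u) = u_j/|u|^d` (ENNReal-valued). -/
def maxSingInt {d : ℕ} (i j : Fin d) (f : EuclideanSpace ℝ (Fin d) → ℝ)
    (x : EuclideanSpace ℝ (Fin d)) : ℝ≥0∞ :=
  ⨆ (ε : ℝ) (_ : 0 < ε),
    ENNReal.ofReal
      |∫ y in {y : EuclideanSpace ℝ (Fin d) | ε < ‖x - y‖},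
          (fderiv ℝ (fun u : EuclideanSpace ℝ (Fin d) => u j / ‖u‖ ^ d) (x - y)
            (EuclideanSpace.single i 1)) * f y ∂volume|


lemma ftc_bound {d : ℕ} {A : EuclideanSpace ℝ (Fin d) → ℝ} (hA : ContDiff ℝ (⊤ : ℕ∞) A)
    (x z : EuclideanSpace ℝ (Fin d)) :
    |A z - A x| ≤ ∫ t in (0:ℝ)..1, ‖fderiv ℝ A (x + t • (z - x))‖ * ‖z - x‖ := by
  have hdiff := hA.differentiable (by simp)
  have hcontF : Continuous (fun w => fderiv ℝ A w) := hA.continuous_fderiv (by simp)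
  have hline : ∀ t : ℝ, HasDerivAt (fun t : ℝ => A (x + t • (z - x)))
      ((fderiv ℝ A (x + t • (z - x))) (z - x)) t := by
    intro t
    have h1 : HasDerivAt (fun t : ℝ => x + t • (z - x)) (z - x) t := by
      simpa using ((hasDerivAt_id t).smul_const (z - x)).const_add x
    exact (hdiff _).hasFDerivAt.comp_hasDerivAt t h1
  have hcont : Continuous fun t : ℝ => (fderiv ℝ A (x + t • (z - x))) (z - x) := by
    have h2 : Continuous fun t : ℝ => x + t • (z - x) := by continuity
    exact (hcontF.comp h2).clm_apply continuous_const
  have heq : A (x + (1:ℝ) • (z - x)) - A (x + (0:ℝ) • (z - x))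
      = ∫ t in (0:ℝ)..1, (fderiv ℝ A (x + t • (z - x))) (z - x) :=
    (intervalIntegral.integral_eq_sub_of_hasDerivAt (fun t _ => hline t)
      (hcont.intervalIntegrable 0 1)).symm
  have hzx : A (x + (1:ℝ) • (z - x)) = A z := by simp
  have hx0 : A (x + (0:ℝ) • (z - x)) = A x := by simp
  rw [hzx, hx0] at heq
  rw [heq]
  calc |∫ t in (0:ℝ)..1, (fderiv ℝ A (x + t • (z - x))) (z - x)|
      ≤ ∫ t in (0:ℝ)..1, |(fderiv ℝ A (x + t • (z - x))) (z - x)| :=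
        intervalIntegral.abs_integral_le_integral_abs zero_le_one
    _ ≤ ∫ t in (0:ℝ)..1, ‖fderiv ℝ A (x + t • (z - x))‖ * ‖z - x‖ := by
        apply intervalIntegral.integral_mono_on zero_le_one
          (hcont.abs.intervalIntegrable 0 1)
          (((hcontF.comp (by continuity)).norm.mul continuous_const).intervalIntegrable 0 1)
        intro t _
        exact (fderiv ℝ A (x + t • (z - x))).le_opNorm (z - x)


lemma scaling_lemma {d : ℕ} {G : EuclideanSpace ℝ (Fin d) → ℝ} (hG : Continuous G)
    (x : EuclideanSpace ℝ (Fin d)) {r t : ℝ} (ht : 0 < t) :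
    ∫⁻ z in ball x r, ENNReal.ofReal (G (x + t • (z - x))) ∂volume
      = ENNReal.ofReal ((t ^ d)⁻¹) * ∫⁻ w in ball x (t * r), ENNReal.ofReal (G w) ∂volume := by
  set h : EuclideanSpace ℝ (Fin d) → ℝ≥0∞ :=
    Set.indicator (ball (0 : EuclideanSpace ℝ (Fin d)) (t * r))
      (fun w => ENNReal.ofReal (G (x + w))) with hh
  have hmeas : Measurable h :=
    (ENNReal.measurable_ofReal.comp
      ((hG.comp (continuous_const.add continuous_id)).measurable)).indicator measurableSet_ball
  have step1 : ∫⁻ z in ball x r, ENNReal.ofReal (G (x + t • (z - x))) ∂volume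
      = ∫⁻ z, h (t • (z - x)) ∂volume := by
    rw [← lintegral_indicator measurableSet_ball]
    congr 1
    funext z
    by_cases hz : z ∈ ball x r
    · have hz' : t • (z - x) ∈ ball (0 : EuclideanSpace ℝ (Fin d)) (t * r) := by
        rw [mem_ball, dist_zero_right, norm_smul, Real.norm_eq_abs, abs_of_pos ht]
        exact (mul_lt_mul_iff_right₀ ht).2 (by rwa [mem_ball, dist_eq_norm] at hz)
      rw [Set.indicator_of_mem hz, hh, Set.indicator_of_mem hz']
    · have hz' : t • (z - x) ∉ ball (0 : EuclideanSpace ℝ (Fin d)) (t * r) := by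
        rw [mem_ball, dist_zero_right, norm_smul, Real.norm_eq_abs, abs_of_pos ht]
        rw [mem_ball, dist_eq_norm] at hz
        exact fun hc => hz ((mul_lt_mul_iff_right₀ ht).1 hc)
      rw [Set.indicator_of_notMem hz, hh, Set.indicator_of_notMem hz']
  have step2 : ∫⁻ z, h (t • (z - x)) ∂volume = ∫⁻ z, h (t • z) ∂volume := by
    simp_rw [sub_eq_add_neg]
    exact lintegral_add_right_eq_self (fun w => h (t • w)) (-x)
  have step3 : ∫⁻ z, h (t • z) ∂volume = ENNReal.ofReal ((t ^ d)⁻¹) * ∫⁻ w, h w ∂volume := by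
    have hmap := MeasureTheory.Measure.map_addHaar_smul
      (volume : Measure (EuclideanSpace ℝ (Fin d))) ht.ne'
    rw [← lintegral_map hmeas (measurable_const_smul t), hmap, lintegral_smul_measure,
      finrank_euclideanSpace_fin, abs_of_nonneg (by positivity), smul_eq_mul]
  have step4 : ∫⁻ w, h w ∂volume = ∫⁻ w in ball x (t * r), ENNReal.ofReal (G w) ∂volume := by
    rw [hh, lintegral_indicator measurableSet_ball]
    have : ∀ w, ENNReal.ofReal (G (x + w))
        = (Set.indicator (ball x (t * r)) (fun u => ENNReal.ofReal (G u))) (x + w) ∨ True := fun _ => Or.inr trivial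
    calc ∫⁻ w in ball (0 : EuclideanSpace ℝ (Fin d)) (t * r), ENNReal.ofReal (G (x + w)) ∂volume
        = ∫⁻ w, (Set.indicator (ball x (t * r)) fun u => ENNReal.ofReal (G u)) (x + w) ∂volume := by
          rw [← lintegral_indicator measurableSet_ball]
          congr 1
          funext w
          by_cases hw : w ∈ ball (0 : EuclideanSpace ℝ (Fin d)) (t * r)
          · have : x + w ∈ ball x (t * r) := by
              rwa [mem_ball, dist_eq_norm, add_sub_cancel_left, ← dist_zero_right]
            simp [Set.indicator_of_mem hw, Set.indicator_of_mem this]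
          · have : x + w ∉ ball x (t * r) := by
              rw [mem_ball, dist_eq_norm, add_sub_cancel_left, ← dist_zero_right]
              exact hw
            simp [Set.indicator_of_notMem hw, Set.indicator_of_notMem this]
      _ = ∫⁻ w, (Set.indicator (ball x (t * r)) fun u => ENNReal.ofReal (G u)) w ∂volume :=
          lintegral_add_left_eq_self _ x
      _ = ∫⁻ w in ball x (t * r), ENNReal.ofReal (G w) ∂volume :=
          lintegral_indicator measurableSet_ball _
  rw [step1, step2, step3, step4]

lemma avg_le_maximal {d : ℕ} (A : EuclideanSpace ℝ (Fin d) → ℝ)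
    (x : EuclideanSpace ℝ (Fin d)) {s : ℝ} (hs : 0 < s) :
    ∫⁻ w in ball x s, ENNReal.ofReal ‖fderiv ℝ A w‖ ∂volume
      ≤ volume (ball x s) * maximalFn (fun z => ‖fderiv ℝ A z‖) x := by
  have hV0 : volume (ball x s) ≠ 0 := (measure_ball_pos volume x hs).ne'
  have hVt : volume (ball x s) ≠ ⊤ := measure_ball_lt_top.ne
  have heq : ∫⁻ w in ball x s, ENNReal.ofReal ‖fderiv ℝ A w‖ ∂volume
      = ∫⁻ w in ball x s, (‖(fun z => ‖fderiv ℝ A z‖) w‖₊ : ℝ≥0∞) ∂volume := by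
    congr 1; funext w; change _ = ‖‖fderiv ℝ A w‖‖ₑ; rw [← ofReal_norm, norm_norm]
  rw [heq]
  have hle : (∫⁻ w in ball x s, (‖(fun z => ‖fderiv ℝ A z‖) w‖₊ : ℝ≥0∞) ∂volume)
      / volume (ball x s) ≤ maximalFn (fun z => ‖fderiv ℝ A z‖) x :=
    le_iSup_of_le s (le_iSup_of_le hs le_rfl)
  rw [ENNReal.div_le_iff hV0 hVt] at hle
  rwa [mul_comm]

lemma local_avg_bound {d : ℕ} {A : EuclideanSpace ℝ (Fin d) → ℝ} (hA : ContDiff ℝ (⊤ : ℕ∞) A)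
    (x : EuclideanSpace ℝ (Fin d)) {r : ℝ} (hr : 0 < r) :
    ∫⁻ z in ball x r, ENNReal.ofReal |A z - A x| ∂volume
      ≤ ENNReal.ofReal r * (volume (ball x r) * maximalFn (fun z => ‖fderiv ℝ A z‖) x) := by
  set G : EuclideanSpace ℝ (Fin d) → ℝ := fun w => ‖fderiv ℝ A w‖ with hGdef
  have hGc : Continuous G := (hA.continuous_fderiv (by simp)).norm
  have hG0 : ∀ w, 0 ≤ G w := fun w => norm_nonneg _
  set M : ℝ≥0∞ := maximalFn (fun z => ‖fderiv ℝ A z‖) x with hM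
  -- the inner function
  set F : EuclideanSpace ℝ (Fin d) → ℝ → ℝ≥0∞ :=
    fun z t => ENNReal.ofReal (G (x + t • (z - x)) * r) with hF
  have hFc : Continuous (Function.uncurry F) := by
    apply ENNReal.continuous_ofReal.comp
    exact ((hGc.comp (continuous_const.add
      (continuous_snd.smul (continuous_fst.sub continuous_const)))).mul continuous_const)
  -- pointwise bound
  have hpt : ∀ z ∈ ball x r, ENNReal.ofReal |A z - A x|
      ≤ ∫⁻ t in Set.Ioc (0:ℝ) 1, F z t ∂volume := by
    intro z hz
    have hzr : ‖z - x‖ ≤ r := le_of_lt (by rwa [mem_ball, dist_eq_norm] at hz)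
    have hcont1 : Continuous fun t : ℝ => G (x + t • (z - x)) * ‖z - x‖ := by
      exact (hGc.comp (continuous_const.add
        ((continuous_id.smul continuous_const)))).mul continuous_const
    have hcont2 : Continuous fun t : ℝ => G (x + t • (z - x)) * r := by
      exact (hGc.comp (continuous_const.add
        ((continuous_id.smul continuous_const)))).mul continuous_const
    have h1 : |A z - A x| ≤ ∫ t in (0:ℝ)..1, G (x + t • (z - x)) * r := by
      refine (ftc_bound hA x z).trans ?_
      apply intervalIntegral.integral_mono_on zero_le_one
        (hcont1.intervalIntegrable 0 1) (hcont2.intervalIntegrable 0 1)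
      intro t _
      exact mul_le_mul_of_nonneg_left hzr (hG0 _)
    have h2 : (∫ t in (0:ℝ)..1, G (x + t • (z - x)) * r)
        = ∫ t in Set.Ioc (0:ℝ) 1, G (x + t • (z - x)) * r ∂volume :=
      intervalIntegral.integral_of_le zero_le_one
    have h3 : ENNReal.ofReal (∫ t in Set.Ioc (0:ℝ) 1, G (x + t • (z - x)) * r ∂volume)
        = ∫⁻ t in Set.Ioc (0:ℝ) 1, ENNReal.ofReal (G (x + t • (z - x)) * r) ∂volume := by
      apply ofReal_integral_eq_lintegral_ofReal
      · exact (hcont2.intervalIntegrable 0 1).1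
      · exact Filter.Eventually.of_forall fun t => mul_nonneg (hG0 _) hr.le
    calc ENNReal.ofReal |A z - A x|
        ≤ ENNReal.ofReal (∫ t in Set.Ioc (0:ℝ) 1, G (x + t • (z - x)) * r ∂volume) := by
          rw [← h2]; exact ENNReal.ofReal_le_ofReal h1
      _ = ∫⁻ t in Set.Ioc (0:ℝ) 1, F z t ∂volume := h3
  -- per-t bound
  have hperT : ∀ t ∈ Set.Ioc (0:ℝ) 1,
      (∫⁻ z in ball x r, F z t ∂volume)
        ≤ ENNReal.ofReal r * (volume (ball x r) * M) := by
    intro t ht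
    have ht0 : 0 < t := ht.1
    have htd : (0:ℝ) < t ^ d := pow_pos ht0 d
    have e1 : (∫⁻ z in ball x r, F z t ∂volume)
        = (∫⁻ z in ball x r, ENNReal.ofReal (G (x + t • (z - x))) ∂volume)
            * ENNReal.ofReal r := by
      simp_rw [hF, ENNReal.ofReal_mul (hG0 _)]
      exact lintegral_mul_const' _ _ ofReal_ne_top
    rw [e1, scaling_lemma hGc x ht0]
    have e2 : volume (ball x (t * r)) = ENNReal.ofReal (t ^ d) * volume (ball x r) := by
      rw [Measure.addHaar_ball_mul_of_pos volume x ht0 r, finrank_euclideanSpace_fin,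
        ← Measure.addHaar_ball_center volume x]
    calc ENNReal.ofReal ((t ^ d)⁻¹)
          * (∫⁻ w in ball x (t * r), ENNReal.ofReal (G w) ∂volume) * ENNReal.ofReal r
        ≤ ENNReal.ofReal ((t ^ d)⁻¹)
          * (volume (ball x (t * r)) * M) * ENNReal.ofReal r := by
          gcongr
          exact avg_le_maximal A x (mul_pos ht0 hr)
      _ = (ENNReal.ofReal ((t ^ d)⁻¹) * ENNReal.ofReal (t ^ d))
            * (volume (ball x r) * M) * ENNReal.ofReal r := by rw [e2]; ring
      _ = ENNReal.ofReal r * (volume (ball x r) * M) := by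
          rw [← ENNReal.ofReal_mul (by positivity), inv_mul_cancel₀ htd.ne',
            ENNReal.ofReal_one, one_mul]
          ring
  -- combine
  have hmeasRHS : Measurable fun z => ∫⁻ t in Set.Ioc (0:ℝ) 1, F z t ∂volume :=
    Measurable.lintegral_prod_right hFc.measurable
  calc ∫⁻ z in ball x r, ENNReal.ofReal |A z - A x| ∂volume
      ≤ ∫⁻ z in ball x r, ∫⁻ t in Set.Ioc (0:ℝ) 1, F z t ∂volume ∂volume :=
        setLIntegral_mono hmeasRHS hpt
    _ = ∫⁻ t in Set.Ioc (0:ℝ) 1, ∫⁻ z in ball x r, F z t ∂volume ∂volume :=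
        lintegral_lintegral_swap (hFc.measurable.aemeasurable)
    _ ≤ ∫⁻ _t in Set.Ioc (0:ℝ) 1,
          ENNReal.ofReal r * (volume (ball x r) * M) ∂volume :=
        setLIntegral_mono measurable_const hperT
    _ = ENNReal.ofReal r * (volume (ball x r) * M) := by
        rw [setLIntegral_const, Real.volume_Ioc]
        simp

/-- Let `d ≥ 2` and `A ∈ C_c^∞(ℝ^d)`.  Then for a.e. `x, y`,
`|A(x)-A(y)|/|x-y| ≤ C_d ( M(∇A)(x) + M(∇A)(y) + ∑_{i,j} T_{i,j}^*(∂_j A)(x) )`. -/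
theorem pointwise_difference_bound (d : ℕ) (hd : 2 ≤ d) :
    ∃ C : ℝ≥0∞, C ≠ 0 ∧ C ≠ ⊤ ∧
      ∀ A : EuclideanSpace ℝ (Fin d) → ℝ, ContDiff ℝ (⊤ : ℕ∞) A → HasCompactSupport A →
        ∀ᵐ x ∂volume, ∀ᵐ y ∂volume,
          ENNReal.ofReal (|A x - A y| / ‖x - y‖)
            ≤ C * (maximalFn (fun z => ‖fderiv ℝ A z‖) x +
                maximalFn (fun z => ‖fderiv ℝ A z‖) y +
                ∑ i, ∑ j,
                  maxSingInt i j (fun z => fderiv ℝ A z (EuclideanSpace.single j 1)) x) := by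
  refine ⟨2 ^ (d + 1), pow_ne_zero _ two_ne_zero, ENNReal.pow_ne_top ENNReal.ofNat_ne_top, ?_⟩
  intro A hA _hsupp
  refine Filter.Eventually.of_forall fun x => Filter.Eventually.of_forall fun y => ?_
  by_cases hxy : x = y
  · subst hxy; simp
  have hr : (0:ℝ) < ‖x - y‖ := by
    rw [norm_pos_iff]; exact sub_ne_zero_of_ne hxy
  set r : ℝ := ‖x - y‖ with hrdef
  set Mx : ℝ≥0∞ := maximalFn (fun z => ‖fderiv ℝ A z‖) x with hMx
  set My : ℝ≥0∞ := maximalFn (fun z => ‖fderiv ℝ A z‖) y with hMy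
  set S : ℝ≥0∞ := ∑ i, ∑ j,
    maxSingInt i j (fun z => fderiv ℝ A z (EuclideanSpace.single j 1)) x with hS
  set V : ℝ≥0∞ := volume (ball x r) with hV
  have hV0 : V ≠ 0 := (measure_ball_pos volume x hr).ne'
  have hVt : V ≠ ⊤ := measure_ball_lt_top.ne
  have hC1 : (1:ℝ≥0∞) ≤ 2 ^ (d + 1) := one_le_pow_of_one_le' one_le_two (d + 1)
  -- ball inclusion
  have hball : ball x r ⊆ ball y (2 * r) := by
    intro z hz
    rw [mem_ball] at hz ⊢
    have hxyd : dist x y = r := by rw [dist_eq_norm]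
    calc dist z y ≤ dist z x + dist x y := dist_triangle z x y
      _ < r + r := by rw [hxyd]; exact add_lt_add_left hz r
      _ = 2 * r := by ring
  have h1 : ∫⁻ z in ball x r, ENNReal.ofReal |A x - A z| ∂volume
      ≤ ENNReal.ofReal r * (V * Mx) := by
    simp_rw [abs_sub_comm (A x)]
    exact local_avg_bound hA x hr
  have h2 : ∫⁻ z in ball x r, ENNReal.ofReal |A z - A y| ∂volume
      ≤ ENNReal.ofReal (2 * r) * ((2:ℝ≥0∞) ^ d * V * My) := by
    have hsub := lintegral_mono_set (μ := volume)
      (f := fun z => ENNReal.ofReal |A z - A y|) hball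
    refine hsub.trans ?_
    refine (local_avg_bound hA y (by positivity : (0:ℝ) < 2 * r)).trans (le_of_eq ?_)
    have h2d : ENNReal.ofReal ((2:ℝ) ^ d) = (2:ℝ≥0∞) ^ d := by
      rw [ENNReal.ofReal_pow (by norm_num), ENNReal.ofReal_ofNat]
    have : volume (ball y (2 * r)) = (2:ℝ≥0∞) ^ d * V := by
      rw [Measure.addHaar_ball_mul_of_pos volume y two_pos r, finrank_euclideanSpace_fin,
        h2d, hV, Measure.addHaar_ball_center volume x]
    rw [this]
  have hmeas1 : Measurable fun z => ENNReal.ofReal |A x - A z| :=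
    ENNReal.measurable_ofReal.comp ((continuous_const.sub hA.continuous).abs.measurable)
  have hsum : V * ENNReal.ofReal |A x - A y|
      ≤ V * (ENNReal.ofReal r * (Mx + 2 ^ (d + 1) * My)) := by
    have e0 : V * ENNReal.ofReal |A x - A y|
        = ∫⁻ _z in ball x r, ENNReal.ofReal |A x - A y| ∂volume := by
      rw [setLIntegral_const, hV, mul_comm]
    rw [e0]
    calc ∫⁻ _z in ball x r, ENNReal.ofReal |A x - A y| ∂volume
        ≤ ∫⁻ z in ball x r,
            (ENNReal.ofReal |A x - A z| + ENNReal.ofReal |A z - A y|) ∂volume := by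
          apply lintegral_mono
          intro z
          dsimp only
          rw [← ENNReal.ofReal_add (abs_nonneg _) (abs_nonneg _)]
          exact ENNReal.ofReal_le_ofReal (abs_sub_le (A x) (A z) (A y))
      _ = (∫⁻ z in ball x r, ENNReal.ofReal |A x - A z| ∂volume)
            + ∫⁻ z in ball x r, ENNReal.ofReal |A z - A y| ∂volume :=
          lintegral_add_left hmeas1 _
      _ ≤ ENNReal.ofReal r * (V * Mx)
            + ENNReal.ofReal (2 * r) * ((2:ℝ≥0∞) ^ d * V * My) := add_le_add h1 h2
      _ = V * (ENNReal.ofReal r * (Mx + 2 ^ (d + 1) * My)) := by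
          rw [ENNReal.ofReal_mul (by norm_num : (0:ℝ) ≤ 2), ENNReal.ofReal_ofNat]
          ring
  have hkey : ENNReal.ofReal |A x - A y| ≤ ENNReal.ofReal r * (Mx + 2 ^ (d + 1) * My) :=
    (ENNReal.mul_le_mul_iff_right hV0 hVt).1 hsum
  rw [ENNReal.ofReal_div_of_pos hr,
    ENNReal.div_le_iff (ENNReal.ofReal_pos.2 hr).ne' ENNReal.ofReal_ne_top]
  refine hkey.trans ?_
  rw [mul_comm (2 ^ (d + 1) * (Mx + My + S)) (ENNReal.ofReal r)]
  apply mul_le_mul_right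
  calc Mx + 2 ^ (d + 1) * My
      ≤ 2 ^ (d + 1) * Mx + 2 ^ (d + 1) * My :=
        add_le_add_left (le_mul_of_one_le_left zero_le hC1) _
    _ ≤ 2 ^ (d + 1) * Mx + (2 ^ (d + 1) * My + 2 ^ (d + 1) * S) :=
        add_le_add_right le_self_add _
    _ = 2 ^ (d + 1) * (Mx + My + S) := by ring
end
end
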